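/- Let U = {(x,y,y₁,y₂,z) ∈ ℝ⁵ : y₂ ≠ 0}, X₁ = ∂/∂y₂, X₂ = ∂/∂x + y₁ ∂/∂y + y₂ ∂/∂y₁ + (y + y₂^{1/3}) ∂/∂z, and S₃ = y ∂/∂x − y₁² ∂/∂y₁ − 3y₁y₂ ∂/∂y₂ + (1/2)y² ∂/∂z. Then on U one has [S₃, X₁] = 3y₁ X₁ and [S₃, X₂] = 3y₂² X₁ − y₁ X₂ (equalities of vector fields, with pointwise function coefficients). In particular, S₃ is an infinitesimal symmetry of the Monge distribution of z' = y + (y'')^{1/3}. -/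
import Mathlib


/-- Lie bracket of vector fields on ℝ⁵, `[V,W](p) = DW(p)(V(p)) − DV(p)(W(p))`. -/
noncomputable def lieBracket (V W : (Fin 5 → ℝ) → (Fin 5 → ℝ)) :
    (Fin 5 → ℝ) → (Fin 5 → ℝ) :=
  fun p => fderiv ℝ W p (V p) - fderiv ℝ V p (W p)

/-- The real odd cube root: `cbrt t = sign(t) · |t|^(1/3)`. -/
noncomputable def cbrt (t : ℝ) : ℝ := Real.sign t * |t| ^ ((1 : ℝ) / 3)

/-- `X₁ = ∂/∂y₂`, coordinates `(x, y, y₁, y₂, z) = (p 0, p 1, p 2, p 3, p 4)`. -/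
noncomputable def X₁ : (Fin 5 → ℝ) → (Fin 5 → ℝ) := fun _ => ![0, 0, 0, 1, 0]

/-- `X₂ = ∂/∂x + y₁ ∂/∂y + y₂ ∂/∂y₁ + (y + y₂^{1/3}) ∂/∂z`. -/
noncomputable def X₂ : (Fin 5 → ℝ) → (Fin 5 → ℝ) :=
  fun p => ![1, p 2, p 3, 0, p 1 + cbrt (p 3)]

/-- `S₃ = y ∂/∂x − y₁² ∂/∂y₁ − 3y₁y₂ ∂/∂y₂ + (1/2)y² ∂/∂z`. -/
noncomputable def S₃ : (Fin 5 → ℝ) → (Fin 5 → ℝ) :=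
  fun p => ![p 1, 0, -(p 2) ^ 2, -3 * p 2 * p 3, (1 / 2) * (p 1) ^ 2]

noncomputable def pr (i : Fin 5) : (Fin 5 → ℝ) →L[ℝ] ℝ := ContinuousLinearMap.proj i

lemma cbrt_pos_eq {t : ℝ} (ht : 0 < t) : cbrt t = t ^ ((1:ℝ)/3) := by
  simp [cbrt, Real.sign_of_pos ht, abs_of_pos ht]

lemma cbrt_neg_eq {t : ℝ} (ht : t < 0) : cbrt t = -((-t) ^ ((1:ℝ)/3)) := by
  simp [cbrt, Real.sign_of_neg ht, abs_of_neg ht]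

lemma hasDerivAt_cbrt {t : ℝ} (ht : t ≠ 0) :
    HasDerivAt cbrt (cbrt t / (3 * t)) t := by
  rcases ht.lt_or_gt with h | h
  · have h1 : HasDerivAt (fun s : ℝ => -((-s) ^ ((1:ℝ)/3)))
        (-(((1:ℝ)/3) * (-t) ^ ((1:ℝ)/3 - 1) * (-1))) t :=
      (((Real.hasStrictDerivAt_rpow_const_of_ne (x := -t) (by linarith) ((1:ℝ)/3)).hasDerivAt.comp
        t (hasDerivAt_neg t))).neg
    have heq : cbrt t / (3 * t) = -(((1:ℝ)/3) * (-t) ^ ((1:ℝ)/3 - 1) * (-1)) := by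
      rw [cbrt_neg_eq h]
      have hp : (0:ℝ) < -t := by linarith
      rw [show ((1:ℝ)/3 - 1) = (1:ℝ)/3 + (-1) by ring, Real.rpow_add hp, Real.rpow_neg_one]
      field_simp
      try ring
    rw [heq]
    refine h1.congr_of_eventuallyEq ?_
    filter_upwards [eventually_lt_nhds h] with s hs
    rw [cbrt_neg_eq hs]
  · have h1 : HasDerivAt (fun s : ℝ => s ^ ((1:ℝ)/3)) (((1:ℝ)/3) * t ^ ((1:ℝ)/3 - 1)) t :=
      (Real.hasStrictDerivAt_rpow_const_of_ne ht ((1:ℝ)/3)).hasDerivAt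
    have heq : cbrt t / (3 * t) = ((1:ℝ)/3) * t ^ ((1:ℝ)/3 - 1) := by
      rw [cbrt_pos_eq h, show ((1:ℝ)/3 - 1) = (1:ℝ)/3 + (-1) by ring, Real.rpow_add h,
        Real.rpow_neg_one]
      field_simp
      try ring
    rw [heq]
    refine h1.congr_of_eventuallyEq ?_
    filter_upwards [eventually_gt_nhds h] with s hs
    rw [cbrt_pos_eq hs]

lemma hasFDerivAt_S₃ (p : Fin 5 → ℝ) :
    HasFDerivAt S₃ (ContinuousLinearMap.pi
      ![pr 1, 0, (-2 * p 2) • pr 2, (-3 * p 3) • pr 2 + (-3 * p 2) • pr 3,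
        (p 1) • pr 1]) p := by
  apply hasFDerivAt_pi.2
  intro i
  fin_cases i <;>
    simp only [S₃, Matrix.cons_val_zero, Matrix.cons_val_one, Matrix.head_cons,
      Matrix.cons_val_two, Matrix.tail_cons, Matrix.cons_val_three, Matrix.cons_val_four,
      Fin.isValue, pow_two]
  · exact hasFDerivAt_apply 1 p
  · exact hasFDerivAt_const 0 p
  · exact (((hasFDerivAt_apply 2 p).mul (hasFDerivAt_apply 2 p)).neg).congr_fderiv
      (by ext v; simp [pr]; ring)
  · exact ((((hasFDerivAt_const (-3:ℝ) p).mul (hasFDerivAt_apply 2 p)).mul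
      (hasFDerivAt_apply 3 p))).congr_fderiv (by ext v; simp [pr]; ring)
  · exact ((hasFDerivAt_const (1/2:ℝ) p).mul
      ((hasFDerivAt_apply 1 p).mul (hasFDerivAt_apply 1 p))).congr_fderiv
      (by ext v; simp [pr]; ring)

lemma hasFDerivAt_X₂ (p : Fin 5 → ℝ) (hp : p 3 ≠ 0) :
    HasFDerivAt X₂ (ContinuousLinearMap.pi
      ![0, pr 2, pr 3, 0, pr 1 + (cbrt (p 3) / (3 * p 3)) • pr 3]) p := by
  apply hasFDerivAt_pi.2
  intro i
  fin_cases i <;>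
    simp only [X₂, Matrix.cons_val_zero, Matrix.cons_val_one, Matrix.head_cons,
      Matrix.cons_val_two, Matrix.tail_cons, Matrix.cons_val_three, Matrix.cons_val_four,
      Fin.isValue]
  · exact hasFDerivAt_const (1:ℝ) p
  · exact hasFDerivAt_apply 2 p
  · exact hasFDerivAt_apply 3 p
  · exact hasFDerivAt_const 0 p
  · have h1 : HasFDerivAt (fun q : Fin 5 → ℝ => cbrt (q 3))
        ((cbrt (p 3) / (3 * p 3)) • pr 3) p := by
      have := HasDerivAt.comp_hasFDerivAt (𝕜 := ℝ) p (hasDerivAt_cbrt hp) (hasFDerivAt_apply 3 p)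
      exact this.congr_fderiv (by ext v; simp [pr, mul_comm])
    exact ((hasFDerivAt_apply 1 p).add h1).congr_fderiv rfl

/-- On `U = {y₂ ≠ 0}` one has `[S₃, X₁] = 3y₁ X₁` and `[S₃, X₂] = 3y₂² X₁ − y₁ X₂`;
in particular `S₃` is an infinitesimal symmetry of the Monge distribution of
`z' = y + (y'')^{1/3}`. -/
theorem symmetry_S₃ :
    ∀ p : Fin 5 → ℝ, p 3 ≠ 0 →
      lieBracket S₃ X₁ p = (3 * p 2) • X₁ p ∧
      lieBracket S₃ X₂ p = (3 * (p 3) ^ 2) • X₁ p - (p 2) • X₂ p := by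
  intro p hp
  have hS := (hasFDerivAt_S₃ p).fderiv
  have hX₁ : fderiv ℝ X₁ p = 0 := (hasFDerivAt_const _ p).fderiv
  have hX₂ := (hasFDerivAt_X₂ p hp).fderiv
  constructor
  · funext i
    simp only [lieBracket, hS, hX₁, Pi.sub_apply, ContinuousLinearMap.zero_apply,
      ContinuousLinearMap.pi_apply, Pi.smul_apply, X₁, S₃, pr]
    fin_cases i <;>
      (try simp [pr, X₁, S₃])
  · funext i
    simp only [lieBracket, hS, hX₂, Pi.sub_apply, ContinuousLinearMap.pi_apply,
      Pi.smul_apply, X₁, X₂, S₃, pr]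
    fin_cases i <;>
      (try simp [pr, X₁, X₂, S₃]) <;> (try field_simp) <;> (try ring)
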